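/- Let $L \subseteq \overline{\mathbb{Q}}$ be a totally imaginary number field with CM-type $\Phi$ lifted from a CM-subfield, and let $L' \supseteq L$ be a finite totally imaginary extension inside $\overline{\mathbb{Q}}$ with $\Phi' = \{\sigma' \in J_{L'} : \sigma'|_L \in \Phi\}$. Let $\mathrm{Ver} : G_L^{\mathrm{ab}} \to G_{L'}^{\mathrm{ab}}$ denote the transfer (Verlagerung) homomorphism associated to the finite-index subgroup $G_{L'} \leq G_L$. Then $\mathrm{tr}_{L',\Phi'} = \mathrm{Ver} \circ \mathrm{tr}_{L,\Phi}$ as maps $G_{\mathbb{Q}} \to G_{L'}^{\mathrm{ab}}$. -/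

import Mathlib

/-!
STATEMENT 4: Let `L ⊆ ℚ̄` be a totally imaginary number field with CM-type `Φ` lifted
from a CM-subfield, and `L' ⊇ L` a finite totally imaginary extension inside `ℚ̄` with
`Φ' = {σ' ∈ J_{L'} : σ'|_L ∈ Φ}`.  Let `Ver : G_L^{ab} → G_{L'}^{ab}` be the transfer
(Verlagerung) homomorphism associated to the finite-index subgroup `G_{L'} ≤ G_L`.
Then `tr_{L',Φ'} = Ver ∘ tr_{L,Φ}` as maps `G_ℚ → G_{L'}^{ab}`.

Since `tr_{L,Φ}(τ) = ∏_{σ ∈ Φ} (w_{τ∘σ}⁻¹ τ w_σ)⁻¹ mod G_L^c`, the identity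
`tr_{L',Φ'}(τ) = Ver(tr_{L,Φ}(τ))` is expressed below as
`tr_{L',Φ'}(τ) = ∏_{σ ∈ Φ} Ver₀((w_{τ∘σ}⁻¹ τ w_σ)⁻¹)`, where
`Ver₀ : G_L → G_{L'}^{ab}` is Mathlib's transfer homomorphism `MonoidHom.transfer`
(which is precisely the composite of the projection `G_L → G_L^{ab}` with `Ver`).
`ℚ̄` is an algebraic closure of `ℚ` with an embedding `emb` into `ℂ`, and `c` is
complex conjugation restricted to `ℚ̄`.
-/

open scoped Classical

variable {Qbar : Type*} [Field Qbar] [Algebra ℚ Qbar]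

/-- the action of `Gal(ℚ̄/ℚ)` on embeddings `F ↪ ℚ̄`, by composition -/
def gact {F : IntermediateField ℚ Qbar} (τ : Qbar ≃ₐ[ℚ] Qbar) (σ : ↥F →+* Qbar) :
    ↥F →+* Qbar :=
  (τ : Qbar →ₐ[ℚ] Qbar).toRingHom.comp σ

section CM

variable (c : Qbar ≃ₐ[ℚ] Qbar)

/-- `K` is a CM-field. -/
def IsCMField (K : IntermediateField ℚ Qbar) : Prop :=
  ∃ cK : ↥K ≃+* ↥K, cK ≠ RingEquiv.refl ↥K ∧
    ∀ (σ : ↥K →+* Qbar) (x : ↥K), σ (cK x) = c (σ x)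

/-- `Φ` is a CM-type of `K`. -/
def IsCMType {K : IntermediateField ℚ Qbar} (Φ : Set (↥K →+* Qbar)) : Prop :=
  Φ ∩ (gact c '' Φ) = ∅ ∧ Φ ∪ (gact c '' Φ) = Set.univ

/-- the inclusion `K → L` of intermediate fields, as a ring homomorphism -/
def incl {K L : IntermediateField ℚ Qbar} (hKL : K ≤ L) : ↥K →+* ↥L where
  toFun x := ⟨x.1, hKL x.2⟩
  map_one' := rfl
  map_mul' _ _ := rfl
  map_zero' := rfl
  map_add' _ _ := rfl

/-- the lift to `L` of a set of embeddings of a subfield `K ⊆ L` -/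
def liftType {K L : IntermediateField ℚ Qbar} (hKL : K ≤ L)
    (ΦK : Set (↥K →+* Qbar)) : Set (↥L →+* Qbar) :=
  {σ | σ.comp (incl hKL) ∈ ΦK}

/-- `Φ` is a CM-type of `L` lifted from a CM-subfield of `L`. -/
def IsLiftedCMType (L : IntermediateField ℚ Qbar) (Φ : Set (↥L →+* Qbar)) : Prop :=
  ∃ (K : IntermediateField ℚ Qbar) (hKL : K ≤ L) (ΦK : Set (↥K →+* Qbar)),
    IsCMField c K ∧ IsCMType c ΦK ∧ Φ = liftType hKL ΦK

/-- `L` is totally imaginary. -/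
def TotallyImaginary (L : IntermediateField ℚ Qbar) : Prop :=
  ∀ σ : ↥L →+* Qbar, gact c σ ≠ σ

/-- a system of lifts for `L`: `w_σ|_L = σ` and `c ∘ w_σ = w_{c∘σ}` -/
def IsLiftSystem (L : IntermediateField ℚ Qbar)
    (w : (↥L →+* Qbar) → (Qbar ≃ₐ[ℚ] Qbar)) : Prop :=
  (∀ (σ : ↥L →+* Qbar) (x : ↥L), w σ (x : Qbar) = σ x) ∧
  (∀ σ : ↥L →+* Qbar, c * w σ = w (gact c σ))

end CM

/-- (a): `w_{τ∘σ}⁻¹ τ w_σ` fixes `L` pointwise. -/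
theorem conj_mem_fixingSubgroup {L : IntermediateField ℚ Qbar}
    (w : (↥L →+* Qbar) → (Qbar ≃ₐ[ℚ] Qbar))
    (hw : ∀ (σ : ↥L →+* Qbar) (x : ↥L), w σ (x : Qbar) = σ x)
    (τ : Qbar ≃ₐ[ℚ] Qbar) (σ : ↥L →+* Qbar) :
    (w (gact τ σ))⁻¹ * τ * w σ ∈ L.fixingSubgroup := by
  rw [IntermediateField.mem_fixingSubgroup_iff]
  intro x hx
  have h1 : w σ x = σ ⟨x, hx⟩ := hw σ ⟨x, hx⟩
  have h2 : τ (σ ⟨x, hx⟩) = gact τ σ ⟨x, hx⟩ := rfl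
  have h3 : w (gact τ σ) x = gact τ σ ⟨x, hx⟩ := hw (gact τ σ) ⟨x, hx⟩
  calc ((w (gact τ σ))⁻¹ * τ * w σ) x
      = (w (gact τ σ))⁻¹ (τ (w σ x)) := rfl
    _ = (w (gact τ σ))⁻¹ (w (gact τ σ) x) := by rw [h1, h2, ← h3]
    _ = x := by
        rw [show ((w (gact τ σ))⁻¹ : Qbar ≃ₐ[ℚ] Qbar) ((w (gact τ σ)) x)
              = ((w (gact τ σ))⁻¹ * (w (gact τ σ))) x from rfl, inv_mul_cancel]
        rfl

/-- `G_L^c`: the topological closure of the commutator subgroup of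
`G_L = Gal(ℚ̄/L)` (Krull topology). -/
noncomputable def Gc (L : IntermediateField ℚ Qbar) : Subgroup ↥(L.fixingSubgroup) :=
  (commutator ↥(L.fixingSubgroup)).topologicalClosure

instance (L : IntermediateField ℚ Qbar) : (Gc L).Normal :=
  Subgroup.is_normal_topologicalClosure _

/-- `G_L^{ab} = G_L / G_L^c` -/
noncomputable def Gab (L : IntermediateField ℚ Qbar) : Type _ :=
  ↥(L.fixingSubgroup) ⧸ Gc L

noncomputable instance (L : IntermediateField ℚ Qbar) : Group (Gab L) :=
  inferInstanceAs (Group (↥(L.fixingSubgroup) ⧸ Gc L))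

noncomputable instance (L : IntermediateField ℚ Qbar) : TopologicalSpace (Gab L) :=
  inferInstanceAs (TopologicalSpace (↥(L.fixingSubgroup) ⧸ Gc L))

open scoped commutatorElement in
/-- the quotient of a group by a normal subgroup containing the commutator subgroup is
commutative -/
noncomputable def commGroupQuotientOf {G : Type*} [Group G] (N : Subgroup G) [N.Normal]
    (h : commutator G ≤ N) : CommGroup (G ⧸ N) :=
  { (inferInstance : Group (G ⧸ N)) with
    mul_comm := by
      intro a b
      induction a using QuotientGroup.induction_on with | _ x => ?_
      induction b using QuotientGroup.induction_on with | _ y => ?_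
      rw [← QuotientGroup.mk_mul, ← QuotientGroup.mk_mul, QuotientGroup.eq]
      have hmem : ⁅y⁻¹, x⁻¹⁆ ∈ commutator G := by
        rw [commutator_def]
        exact Subgroup.commutator_mem_commutator (Subgroup.mem_top _) (Subgroup.mem_top _)
      have heq : (x * y)⁻¹ * (y * x) = ⁅y⁻¹, x⁻¹⁆ := by
        rw [commutatorElement_def]; group
      rw [heq]; exact h hmem }

noncomputable instance (L : IntermediateField ℚ Qbar) : CommGroup (Gab L) :=
  commGroupQuotientOf (Gc L) (Subgroup.le_topologicalClosure _)

/-- the term `(w_{τ∘σ}⁻¹ τ w_σ)⁻¹ mod G_L^c` of the type transfer -/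
noncomputable def trTerm {L : IntermediateField ℚ Qbar}
    (w : (↥L →+* Qbar) → (Qbar ≃ₐ[ℚ] Qbar))
    (hw : ∀ (σ : ↥L →+* Qbar) (x : ↥L), w σ (x : Qbar) = σ x)
    (τ : Qbar ≃ₐ[ℚ] Qbar) (σ : ↥L →+* Qbar) : Gab L :=
  QuotientGroup.mk
    ((⟨(w (gact τ σ))⁻¹ * τ * w σ, conj_mem_fixingSubgroup w hw τ σ⟩ :
        ↥(L.fixingSubgroup))⁻¹)

/-- the type transfer `tr_{L,Ψ}(τ)`, computed with a system of lifts `w` -/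
noncomputable def typeTransfer {L : IntermediateField ℚ Qbar}
    (w : (↥L →+* Qbar) → (Qbar ≃ₐ[ℚ] Qbar))
    (hw : ∀ (σ : ↥L →+* Qbar) (x : ↥L), w σ (x : Qbar) = σ x)
    (Ψ : Finset (↥L →+* Qbar)) (τ : Qbar ≃ₐ[ℚ] Qbar) : Gab L :=
  ∏ σ ∈ Ψ, trTerm w hw τ σ

/-- the transfer homomorphism `G_L → G_{L'}^{ab}` associated to the finite-index
subgroup `G_{L'} ≤ G_L` (its factorization through `G_L^{ab}` is the classical
Verlagerung `Ver : G_L^{ab} → G_{L'}^{ab}`) -/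
noncomputable def verHom (L L' : IntermediateField ℚ Qbar) (hLL' : L ≤ L')
    [Subgroup.FiniteIndex
      ((IntermediateField.fixingSubgroup L').subgroupOf (IntermediateField.fixingSubgroup L))] :
    ↥(L.fixingSubgroup) →* Gab L' :=
  MonoidHom.transfer ((QuotientGroup.mk' (Gc L')).comp
    (Subgroup.subgroupOfEquivOfLe
      (IntermediateField.fixingSubgroup_le hLL')).toMonoidHom)

section TransferHelpers

open Subgroup Subgroup.leftTransversals

variable {G₀ : Type*} [Group G₀] {H : Subgroup G₀} {A : Type*} [CommGroup A]

lemma toEquiv_eq_of_mem {S : Set G₀} (hS : Subgroup.IsComplement S (H : Set G₀))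
    {g : G₀} (hg : g ∈ S) :
    hS.leftQuotientEquiv (Quotient.mk'' g) = ⟨g, hg⟩ := by
  rw [Equiv.apply_eq_iff_eq_symm_apply]
  rfl

lemma diff_eq_prod_subtype [H.FiniteIndex] (ϕ : H →* A)
    (S T : H.LeftTransversal) {ι : Type*} [Fintype ι]
    (a b : ι → G₀)
    (ha : ∀ i, a i ∈ (S : Set G₀)) (hb : ∀ i, b i ∈ (T : Set G₀))
    (hab : ∀ i, (a i)⁻¹ * b i ∈ H)
    (hinj : ∀ i j : ι, (Quotient.mk'' (a i) : G₀ ⧸ H) = Quotient.mk'' (a j) → i = j)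
    (hsurj : ∀ q : G₀ ⧸ H, ∃ i, (Quotient.mk'' (a i) : G₀ ⧸ H) = q) :
    Subgroup.leftTransversals.diff ϕ S T = ∏ i, ϕ ⟨(a i)⁻¹ * b i, hab i⟩ := by
  letI := H.fintypeQuotientOfFiniteIndex
  unfold Subgroup.leftTransversals.diff
  refine (Finset.prod_bij (fun (i : ι) (_ : i ∈ Finset.univ) => (Quotient.mk'' (a i) : G₀ ⧸ H))
      (fun _ _ => Finset.mem_univ _)
      (fun i _ j _ h => hinj i j h)
      (fun q _ => ⟨(hsurj q).choose, Finset.mem_univ _, (hsurj q).choose_spec⟩)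
      (fun i _ => ?_)).symm
  have hqb : (Quotient.mk'' (a i) : G₀ ⧸ H) = Quotient.mk'' (b i) :=
    Quotient.sound' (QuotientGroup.leftRel_apply.mpr (hab i))
  have h1 : ((S.2.leftQuotientEquiv (Quotient.mk'' (a i)) : G₀)) = a i :=
    congrArg Subtype.val (toEquiv_eq_of_mem S.2 (ha i))
  have h2 : ((T.2.leftQuotientEquiv (Quotient.mk'' (a i)) : G₀)) = b i := by
    rw [hqb]; exact congrArg Subtype.val (toEquiv_eq_of_mem T.2 (hb i))
  exact congrArg ϕ (Subtype.ext (by simp only [h1, h2]))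

/-- combinatorial lemma: products of a conjugation-invariant function over two
"CM-type-like" finsets agree -/
lemma prod_eq_of_cm_cond {α M : Type*} [DecidableEq α] [CommMonoid M]
    (j : α → α) (hj : ∀ x, j (j x) = x) (F : α → M) (hF : ∀ x, F (j x) = F x)
    (Φ Ψ : Finset α) (hΦ : ∀ x, x ∈ Φ ↔ j x ∉ Φ) (hΨ : ∀ x, x ∈ Ψ ↔ j x ∉ Ψ) :
    ∏ x ∈ Φ, F x = ∏ x ∈ Ψ, F x := by
  have key : ∏ x ∈ Φ \ Ψ, F x = ∏ x ∈ Ψ \ Φ, F x := by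
    refine Finset.prod_bij (fun x _ => j x) ?_ ?_ ?_ ?_
    · intro x hx
      rw [Finset.mem_sdiff] at hx ⊢
      exact ⟨(hΨ (j x)).mpr (by rw [hj]; exact hx.2), (hΦ x).mp hx.1⟩
    · intro x _ y _ h
      have := congrArg j h
      rwa [hj, hj] at this
    · intro y hy
      rw [Finset.mem_sdiff] at hy
      refine ⟨j y, ?_, hj y⟩
      rw [Finset.mem_sdiff]
      exact ⟨(hΦ (j y)).mpr (by rw [hj]; exact hy.2), (hΨ y).mp hy.1⟩
    · intro x _
      exact (hF x).symm
  calc ∏ x ∈ Φ, F x = (∏ x ∈ Φ \ Ψ, F x) * ∏ x ∈ Φ ∩ Ψ, F x := by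
        rw [← Finset.sdiff_inter_self_left Φ Ψ, Finset.prod_sdiff Finset.inter_subset_left]
    _ = (∏ x ∈ Ψ \ Φ, F x) * ∏ x ∈ Ψ ∩ Φ, F x := by rw [key, Finset.inter_comm]
    _ = ∏ x ∈ Ψ, F x := by
        rw [← Finset.sdiff_inter_self_left Ψ Φ, Finset.prod_sdiff Finset.inter_subset_left]

end TransferHelpers

section GactHelpers

variable {Qbar : Type*} [Field Qbar] [Algebra ℚ Qbar]

lemma gact_apply {F : IntermediateField ℚ Qbar} (τ : Qbar ≃ₐ[ℚ] Qbar) (σ : ↥F →+* Qbar)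
    (x : ↥F) : gact τ σ x = τ (σ x) := rfl

lemma gact_one {F : IntermediateField ℚ Qbar} (σ : ↥F →+* Qbar) : gact 1 σ = σ :=
  RingHom.ext fun _ => rfl

lemma gact_mul {F : IntermediateField ℚ Qbar} (τ₁ τ₂ : Qbar ≃ₐ[ℚ] Qbar) (σ : ↥F →+* Qbar) :
    gact (τ₁ * τ₂) σ = gact τ₁ (gact τ₂ σ) :=
  RingHom.ext fun _ => rfl

lemma gact_comp_incl {K L : IntermediateField ℚ Qbar} (hKL : K ≤ L) (τ : Qbar ≃ₐ[ℚ] Qbar)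
    (σ : ↥L →+* Qbar) :
    (gact τ σ).comp (incl hKL) = gact τ (σ.comp (incl hKL)) :=
  RingHom.ext fun _ => rfl

lemma memfix {M : IntermediateField ℚ Qbar} (τ : Qbar ≃ₐ[ℚ] Qbar) :
    τ ∈ M.fixingSubgroup ↔ ∀ x : ↥M, τ ↑x = ↑x := by
  rw [IntermediateField.mem_fixingSubgroup_iff]
  exact ⟨fun h x => h x x.2, fun h x hx => h ⟨x, hx⟩⟩

lemma inv_apply_eq' (e : Qbar ≃ₐ[ℚ] Qbar) (y x : Qbar) : e⁻¹ y = x ↔ y = e x := by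
  have h : ∀ z, e (e⁻¹ z) = z := fun z => by rw [← AlgEquiv.mul_apply, mul_inv_cancel]; rfl
  have h' : ∀ z, e⁻¹ (e z) = z := fun z => by rw [← AlgEquiv.mul_apply, inv_mul_cancel]; rfl
  constructor
  · rintro rfl; exact (h y).symm
  · rintro rfl; exact h' x

/-- key condition satisfied by (images of) lifted CM types -/
lemma lifted_cm_cond (c : Qbar ≃ₐ[ℚ] Qbar) (hc2 : ∀ x, c (c x) = x)
    {L : IntermediateField ℚ Qbar} {Φ : Finset (↥L →+* Qbar)}
    (hΦ : IsLiftedCMType c L ↑Φ) (τ : Qbar ≃ₐ[ℚ] Qbar) :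
    ∀ σ, σ ∈ Φ.image (gact τ) ↔ gact c σ ∉ Φ.image (gact τ) := by
  obtain ⟨K, hKL, ΦK, ⟨cK, -, hcK⟩, ⟨hdisj, huniv⟩, hlift⟩ := hΦ
  have hgactcc : ∀ (F : IntermediateField ℚ Qbar) (ν : ↥F →+* Qbar),
      gact c (gact c ν) = ν := by
    intro F ν
    ext x
    simp only [gact_apply]
    exact hc2 (ν x)
  have hmem : ∀ σ : ↥L →+* Qbar, σ ∈ Φ ↔ σ.comp (incl hKL) ∈ ΦK := by
    intro σ
    rw [← Finset.mem_coe, hlift]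
    rfl
  have hKcond : ∀ ν : ↥K →+* Qbar, ν ∈ ΦK ↔ gact c ν ∉ ΦK := by
    intro ν
    constructor
    · intro hν hcν
      have h : gact c ν ∈ ΦK ∩ (gact c '' ΦK) := ⟨hcν, ⟨ν, hν, rfl⟩⟩
      rw [hdisj] at h
      exact h
    · intro h
      by_contra hν
      have hu : ν ∈ ΦK ∪ (gact c '' ΦK) := huniv ▸ Set.mem_univ ν
      rcases hu with h' | ⟨μ, hμ, hμν⟩
      · exact hν h'
      · exact h (by rw [← hμν, hgactcc]; exact hμ)
  have hcomm : ∀ (υ : Qbar ≃ₐ[ℚ] Qbar) (ν : ↥K →+* Qbar),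
      gact c (gact υ ν) = gact υ (gact c ν) := by
    intro υ ν
    ext x
    have h1 := hcK (gact υ ν) x
    have h2 := hcK ν x
    calc gact c (gact υ ν) x = c ((gact υ ν) x) := rfl
      _ = (gact υ ν) (cK x) := h1.symm
      _ = υ (ν (cK x)) := rfl
      _ = υ (c (ν x)) := by rw [h2]
      _ = gact υ (gact c ν) x := rfl
  have himg : ∀ σ : ↥L →+* Qbar, σ ∈ Φ.image (gact τ) ↔ gact τ⁻¹ σ ∈ Φ := by
    intro σ
    rw [Finset.mem_image]
    constructor
    · rintro ⟨ρ, hρ, rfl⟩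
      have h : gact τ⁻¹ (gact τ ρ) = ρ := by rw [← gact_mul, inv_mul_cancel, gact_one]
      rwa [h]
    · intro h
      exact ⟨gact τ⁻¹ σ, h, by rw [← gact_mul, mul_inv_cancel, gact_one]⟩
  intro σ
  rw [himg, himg, hmem, hmem]
  have hres : (gact τ⁻¹ (gact c σ)).comp (incl hKL) =
      gact c ((gact τ⁻¹ σ).comp (incl hKL)) := by
    simp only [gact_comp_incl]
    exact (hcomm τ⁻¹ (σ.comp (incl hKL))).symm
  rw [hres]
  exact hKcond _

end GactHelpers

section TransversalConstruction

variable {Qbar : Type*} [Field Qbar] [Algebra ℚ Qbar]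
variable {L L' : IntermediateField ℚ Qbar} (hLL' : L ≤ L')
variable (w : (↥L →+* Qbar) → (Qbar ≃ₐ[ℚ] Qbar)) (w' : (↥L' →+* Qbar) → (Qbar ≃ₐ[ℚ] Qbar))

/-- the transversal attached to `σ : J_L`: all `(w σ)⁻¹ * w' σ'` -/
def Xset (σ : ↥L →+* Qbar) : Set ↥(L.fixingSubgroup) :=
  {g | ∃ σ' : ↥L' →+* Qbar, (g : Qbar ≃ₐ[ℚ] Qbar) = (w σ)⁻¹ * w' σ'}

variable (hw : ∀ (σ : ↥L →+* Qbar) (x : ↥L), w σ ↑x = σ x)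
variable (hw' : ∀ (σ' : ↥L' →+* Qbar) (x : ↥L'), w' σ' ↑x = σ' x)

section basic

include hLL' hw hw'

lemma wmem {σ : ↥L →+* Qbar} {σ' : ↥L' →+* Qbar} (hσ' : σ'.comp (incl hLL') = σ) :
    (w σ)⁻¹ * w' σ' ∈ L.fixingSubgroup := by
  rw [memfix]
  intro x
  have h1 : w' σ' ↑(⟨↑x, hLL' x.2⟩ : ↥L') = σ' ⟨↑x, hLL' x.2⟩ := hw' _ _
  have h2 : σ' ⟨↑x, hLL' x.2⟩ = σ x := by rw [← hσ']; rfl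
  have h3 : w σ ↑x = σ x := hw σ x
  have h4 : w' σ' ↑x = w σ ↑x := by
    have : ((⟨↑x, hLL' x.2⟩ : ↥L') : Qbar) = ↑x := rfl
    rw [h3, ← h2, ← h1, this]
  calc ((w σ)⁻¹ * w' σ') ↑x = (w σ)⁻¹ (w' σ' ↑x) := rfl
    _ = (w σ)⁻¹ (w σ ↑x) := by rw [h4]
    _ = ↑x := by rw [← AlgEquiv.mul_apply, inv_mul_cancel]; rfl

/-- the distinguished element of the transversal `Xset σ` attached to an extension `σ'` -/
noncomputable def tElem {σ : ↥L →+* Qbar} {σ' : ↥L' →+* Qbar}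
    (hσ' : σ'.comp (incl hLL') = σ) : ↥(L.fixingSubgroup) :=
  ⟨(w σ)⁻¹ * w' σ', wmem hLL' w w' hw hw' hσ'⟩

lemma tElem_inv_mul_mem_iff {σ : ↥L →+* Qbar} {σ' : ↥L' →+* Qbar}
    (hσ' : σ'.comp (incl hLL') = σ) (g : ↥(L.fixingSubgroup)) :
    (tElem hLL' w w' hw hw' hσ')⁻¹ * g ∈
        (L'.fixingSubgroup).subgroupOf L.fixingSubgroup ↔
      ∀ x : ↥L', (w σ * ↑g) ↑x = σ' x := by
  rw [Subgroup.mem_subgroupOf]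
  have hcoe : (((tElem hLL' w w' hw hw' hσ')⁻¹ * g : ↥(L.fixingSubgroup)) :
      Qbar ≃ₐ[ℚ] Qbar) = ((w σ)⁻¹ * w' σ')⁻¹ * (g : Qbar ≃ₐ[ℚ] Qbar) := rfl
  rw [hcoe, memfix]
  have hpt : ∀ x : ↥L',
      (((w σ)⁻¹ * w' σ')⁻¹ * (g : Qbar ≃ₐ[ℚ] Qbar)) ↑x =
        (w' σ')⁻¹ ((w σ * ↑g) ↑x) := by
    intro x
    rw [mul_inv_rev, inv_inv]
    rfl
  constructor
  · intro h x
    have hx := h x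
    rw [hpt x, inv_apply_eq'] at hx
    rw [hx]
    exact hw' σ' x
  · intro h x
    rw [hpt x, inv_apply_eq', h x]
    exact (hw' σ' x).symm

lemma coset_eq_iff {σ : ↥L →+* Qbar} {σ' : ↥L' →+* Qbar}
    (hσ' : σ'.comp (incl hLL') = σ) (g : ↥(L.fixingSubgroup)) :
    (Quotient.mk'' (tElem hLL' w w' hw hw' hσ') :
        ↥(L.fixingSubgroup) ⧸ (L'.fixingSubgroup).subgroupOf L.fixingSubgroup) =
        Quotient.mk'' g ↔
      ∀ x : ↥L', (w σ * ↑g) ↑x = σ' x := by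
  rw [Quotient.eq'', QuotientGroup.leftRel_apply]
  exact tElem_inv_mul_mem_iff hLL' w w' hw hw' hσ' g

/-- the restriction to `L'` of `w σ * g`, for `g ∈ G_L`, extends `σ` -/
lemma res_comp_incl (σ : ↥L →+* Qbar) (g : ↥(L.fixingSubgroup)) :
    (gact (w σ * (g : Qbar ≃ₐ[ℚ] Qbar)) (SubringClass.subtype L')).comp (incl hLL') = σ := by
  ext x
  have hx : (g : Qbar ≃ₐ[ℚ] Qbar) ↑x = ↑x := (memfix _).mp g.2 x
  calc ((gact (w σ * (g : Qbar ≃ₐ[ℚ] Qbar)) (SubringClass.subtype L')).comp (incl hLL')) x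
      = (w σ) ((g : Qbar ≃ₐ[ℚ] Qbar) ↑x) := rfl
    _ = w σ ↑x := by rw [hx]
    _ = σ x := hw σ x

lemma mem_Xset_iff (σ : ↥L →+* Qbar) (g : ↥(L.fixingSubgroup)) :
    g ∈ Xset w w' σ ↔ ∃ (σ' : ↥L' →+* Qbar) (hσ' : σ'.comp (incl hLL') = σ),
      g = tElem hLL' w w' hw hw' hσ' := by
  constructor
  · rintro ⟨σ', hg⟩
    have hσ' : σ'.comp (incl hLL') = σ := by
      ext x
      have hx : (g : Qbar ≃ₐ[ℚ] Qbar) ↑x = ↑x := (memfix _).mp g.2 x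
      have h1 : w σ * (g : Qbar ≃ₐ[ℚ] Qbar) = w' σ' := by
        rw [hg, ← mul_assoc, mul_inv_cancel, one_mul]
      have h2 : (σ'.comp (incl hLL')) x = w' σ' ↑x := (hw' σ' ⟨↑x, hLL' x.2⟩).symm
      rw [h2, ← h1]
      calc (w σ * (g : Qbar ≃ₐ[ℚ] Qbar)) ↑x = w σ ((g : Qbar ≃ₐ[ℚ] Qbar) ↑x) := rfl
        _ = w σ ↑x := by rw [hx]
        _ = σ x := hw σ x
    exact ⟨σ', hσ', Subtype.ext hg⟩
  · rintro ⟨σ', hσ', rfl⟩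
    exact ⟨σ', rfl⟩

lemma Xset_mem_leftTransversals (σ : ↥L →+* Qbar) :
    Subgroup.IsComplement (Xset w w' σ)
      (((L'.fixingSubgroup).subgroupOf L.fixingSubgroup : Subgroup _) :
        Set ↥(L.fixingSubgroup)) := by
  rw [Subgroup.isComplement_iff_existsUnique_inv_mul_mem]
  intro g
  set σ'g : ↥L' →+* Qbar := gact (w σ * (g : Qbar ≃ₐ[ℚ] Qbar)) (SubringClass.subtype L') with hσ'g
  have hext : σ'g.comp (incl hLL') = σ := res_comp_incl hLL' w w' hw hw' σ g
  refine ⟨⟨tElem hLL' w w' hw hw' hext, ⟨σ'g, rfl⟩⟩, ?_, ?_⟩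
  · exact (tElem_inv_mul_mem_iff hLL' w w' hw hw' hext g).mpr (fun x => rfl)
  · rintro ⟨s, hs⟩ hmem
    obtain ⟨σ', hσ', rfl⟩ := (mem_Xset_iff hLL' w w' hw hw' σ s).mp hs
    have h := (tElem_inv_mul_mem_iff hLL' w w' hw hw' hσ' g).mp hmem
    have hσeq : σ' = σ'g := by
      ext x
      rw [← h x]
      rfl
    apply Subtype.ext
    apply Subtype.ext
    show ((w σ)⁻¹ * w' σ' : Qbar ≃ₐ[ℚ] Qbar) = (w σ)⁻¹ * w' σ'g
    rw [hσeq]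

end basic

/-- conjugation invariance of the transversals -/
lemma Xset_conj (c : Qbar ≃ₐ[ℚ] Qbar) (hc2 : c * c = 1)
    (hwc : ∀ σ, c * w σ = w (gact c σ)) (hw'c : ∀ σ', c * w' σ' = w' (gact c σ'))
    (σ : ↥L →+* Qbar) : Xset w w' (gact c σ) = Xset w w' σ := by
  have hcinv : c⁻¹ = c := inv_eq_of_mul_eq_one_right hc2
  ext g
  constructor
  · rintro ⟨σ', hg⟩
    refine ⟨gact c σ', ?_⟩
    rw [hg, ← hwc, ← hw'c, mul_inv_rev, hcinv, mul_assoc]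
  · rintro ⟨σ', hg⟩
    refine ⟨gact c σ', ?_⟩
    rw [hg, ← hwc, ← hw'c, mul_inv_rev, hcinv, mul_assoc, ← mul_assoc c c, hc2, one_mul]

end TransversalConstruction

set_option synthInstance.maxHeartbeats 1000000 in
set_option maxHeartbeats 2000000 in
theorem statement4
    (Qbar : Type*) [Field Qbar] [Algebra ℚ Qbar] [IsAlgClosure ℚ Qbar]
    -- complex conjugation on `ℚ̄`, via an embedding of `ℚ̄` into `ℂ`
    (emb : Qbar →+* ℂ) (c : Qbar ≃ₐ[ℚ] Qbar)
    (hc : ∀ x : Qbar, emb (c x) = (starRingEnd ℂ) (emb x))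
    (L L' : IntermediateField ℚ Qbar) [FiniteDimensional ℚ L] [FiniteDimensional ℚ L']
    (hLL' : L ≤ L')
    (hLim : TotallyImaginary c L) (hLim' : TotallyImaginary c L')
    (Φ : Finset (↥L →+* Qbar)) (hΦ : IsLiftedCMType c L ↑Φ)
    (Φ' : Finset (↥L' →+* Qbar))
    (hΦ' : (↑Φ' : Set (↥L' →+* Qbar)) = liftType hLL' (↑Φ : Set (↥L →+* Qbar)))
    -- `G_{L'}` has finite index in `G_L`
    [Subgroup.FiniteIndex
      ((IntermediateField.fixingSubgroup L').subgroupOf (IntermediateField.fixingSubgroup L))]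
    -- systems of lifts for `L'` and `L`, computing the respective type transfers
    (w' : (↥L' →+* Qbar) → (Qbar ≃ₐ[ℚ] Qbar)) (hw' : IsLiftSystem c L' w')
    (w : (↥L →+* Qbar) → (Qbar ≃ₐ[ℚ] Qbar)) (hw : IsLiftSystem c L w) :
    ∀ τ : Qbar ≃ₐ[ℚ] Qbar,
      typeTransfer w' hw'.1 Φ' τ =
        ∏ σ ∈ Φ, verHom L L' hLL'
          ((⟨(w (gact τ σ))⁻¹ * τ * w σ, conj_mem_fixingSubgroup w hw.1 τ σ⟩ :
              ↥(L.fixingSubgroup))⁻¹) := by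
  intro τ
  classical
  letI : Group (Gab L') := (instCommGroupGab L').toGroup
  -- `c` is an involution
  have hc2 : ∀ x : Qbar, c (c x) = x := by
    intro x
    apply emb.injective
    rw [hc, hc, Complex.conj_conj]
  have hcc : c * c = 1 := by
    apply AlgEquiv.ext
    intro x
    exact hc2 x
  have hjj : ∀ σ : ↥L →+* Qbar, gact c (gact c σ) = σ := fun σ => by
    rw [← gact_mul, hcc, gact_one]
  -- notation
  set H : Subgroup ↥(L.fixingSubgroup) :=
    (IntermediateField.fixingSubgroup L').subgroupOf (IntermediateField.fixingSubgroup L) with hH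
  set φ : ↥H →* Gab L' :=
    ((QuotientGroup.mk' (Gc L')).comp
      (Subgroup.subgroupOfEquivOfLe
        (IntermediateField.fixingSubgroup_le hLL')).toMonoidHom) with hφdef
  have hver : verHom L L' hLL' = MonoidHom.transfer φ := rfl
  -- the transversals
  let XT : (↥L →+* Qbar) → H.LeftTransversal :=
    fun σ => ⟨Xset w w' σ, Xset_mem_leftTransversals hLL' w w' hw.1 hw'.1 σ⟩
  have hXc : ∀ σ, XT (gact c σ) = XT σ := fun σ =>
    Subtype.ext (Xset_conj w w' c hcc hw.2 hw'.2 σ)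
  let T₀ : H.LeftTransversal := default
  let F : (↥L →+* Qbar) → Gab L' := fun σ => Subgroup.leftTransversals.diff φ T₀ (XT σ)
  have hFc : ∀ σ, F (gact c σ) = F σ := fun σ => by
    show Subgroup.leftTransversals.diff φ T₀ (XT (gact c σ)) = _
    rw [hXc σ]
  -- fibers
  let fib : (↥L →+* Qbar) → Finset (↥L' →+* Qbar) :=
    fun σ => Φ'.filter (fun σ' => σ'.comp (incl hLL') = σ)
  have hfib : ∀ σ' : ↥L' →+* Qbar, σ' ∈ Φ' ↔ σ'.comp (incl hLL') ∈ Φ := by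
    intro σ'
    rw [← Finset.mem_coe, hΦ', ← Finset.mem_coe]
    rfl
  have hmemfib : ∀ (σ : ↥L →+* Qbar), σ ∈ Φ →
      ∀ σ' : ↥L' →+* Qbar, (σ' ∈ fib σ ↔ σ'.comp (incl hLL') = σ) := by
    intro σ hσ σ'
    rw [Finset.mem_filter]
    exact ⟨And.right, fun h => ⟨(hfib σ').mpr (h ▸ hσ), h⟩⟩
  -- the key per-σ computation
  have hkey : ∀ σ ∈ Φ,
      verHom L L' hLL'
        ((⟨(w (gact τ σ))⁻¹ * τ * w σ, conj_mem_fixingSubgroup w hw.1 τ σ⟩ :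
            ↥(L.fixingSubgroup))⁻¹) =
      F σ * (F (gact τ σ))⁻¹ * ∏ σ' ∈ fib σ, trTerm w' hw'.1 τ σ' := by
    intro σ hσ
    letI instFib : Fintype {σ' : ↥L' →+* Qbar // σ'.comp (incl hLL') = σ} :=
      Fintype.subtype (fib σ) (hmemfib σ hσ)
    set X : ↥(L.fixingSubgroup) :=
      ⟨(w (gact τ σ))⁻¹ * τ * w σ, conj_mem_fixingSubgroup w hw.1 τ σ⟩ with hX
    have hρi : ∀ i : {σ' : ↥L' →+* Qbar // σ'.comp (incl hLL') = σ},
        (gact τ i.1).comp (incl hLL') = gact τ σ := fun i => by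
      rw [gact_comp_incl, i.2]
    let a : {σ' : ↥L' →+* Qbar // σ'.comp (incl hLL') = σ} → ↥(L.fixingSubgroup) :=
      fun i => tElem hLL' w w' hw.1 hw'.1 (hρi i)
    let b : {σ' : ↥L' →+* Qbar // σ'.comp (incl hLL') = σ} → ↥(L.fixingSubgroup) :=
      fun i => X * tElem hLL' w w' hw.1 hw'.1 i.2
    have hval : ∀ i, (((a i)⁻¹ * b i : ↥(L.fixingSubgroup)) : Qbar ≃ₐ[ℚ] Qbar) =
        (w' (gact τ i.1))⁻¹ * τ * w' i.1 := by
      intro i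
      show ((w (gact τ σ))⁻¹ * w' (gact τ i.1))⁻¹ *
        ((w (gact τ σ))⁻¹ * τ * w σ * ((w σ)⁻¹ * w' i.1)) = _
      group
    have hab : ∀ i, (a i)⁻¹ * b i ∈ H := by
      intro i
      rw [hH, Subgroup.mem_subgroupOf, hval i]
      exact conj_mem_fixingSubgroup w' hw'.1 τ i.1
    have ha : ∀ i, a i ∈ (XT (gact τ σ) : Set ↥(L.fixingSubgroup)) := fun i => ⟨gact τ i.1, rfl⟩
    have hb : ∀ i, b i ∈ ((X • XT σ : Subgroup.LeftTransversal _) : Set ↥(L.fixingSubgroup)) :=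
      fun i => Set.smul_mem_smul_set ⟨i.1, rfl⟩
    have hinj : ∀ i j, (Quotient.mk'' (a i) : ↥(L.fixingSubgroup) ⧸ H) = Quotient.mk'' (a j) →
        i = j := by
      intro i j hij
      have h := (coset_eq_iff hLL' w w' hw.1 hw'.1 (hρi i) (a j)).mp hij
      have h2 : gact τ i.1 = gact τ j.1 := by
        ext x
        rw [← h x]
        show (w (gact τ σ) * ((w (gact τ σ))⁻¹ * w' (gact τ j.1))) ↑x = _
        rw [← mul_assoc, mul_inv_cancel, one_mul]
        exact hw'.1 (gact τ j.1) x
      apply Subtype.ext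
      have := congrArg (gact τ⁻¹) h2
      rwa [← gact_mul, inv_mul_cancel, gact_one, ← gact_mul, inv_mul_cancel, gact_one] at this
    have hsurj : ∀ q : ↥(L.fixingSubgroup) ⧸ H, ∃ i, (Quotient.mk'' (a i) :
        ↥(L.fixingSubgroup) ⧸ H) = q := by
      intro q
      induction q using Quotient.inductionOn' with
      | h g =>
        refine ⟨⟨gact τ⁻¹ (gact (w (gact τ σ) * (g : Qbar ≃ₐ[ℚ] Qbar))
          (SubringClass.subtype L')), ?_⟩, ?_⟩
        · rw [gact_comp_incl, res_comp_incl hLL' w w' hw.1 hw'.1 (gact τ σ) g,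
            ← gact_mul, inv_mul_cancel, gact_one]
        · refine (coset_eq_iff hLL' w w' hw.1 hw'.1 (hρi _) g).mpr ?_
          have hττ : gact τ (gact τ⁻¹ (gact (w (gact τ σ) * (g : Qbar ≃ₐ[ℚ] Qbar))
              (SubringClass.subtype L'))) =
              gact (w (gact τ σ) * (g : Qbar ≃ₐ[ℚ] Qbar)) (SubringClass.subtype L') := by
            rw [← gact_mul, mul_inv_cancel, gact_one]
          rw [hττ]
          exact fun x => rfl
    have hdiff2 : Subgroup.leftTransversals.diff φ (XT (gact τ σ)) (X • XT σ) =
        ∏ i, φ ⟨(a i)⁻¹ * b i, hab i⟩ :=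
      diff_eq_prod_subtype φ (XT (gact τ σ)) (X • XT σ) a b ha hb hab hinj hsurj
    have hφterm : ∀ i, φ ⟨(a i)⁻¹ * b i, hab i⟩ = (trTerm w' hw'.1 τ i.1)⁻¹ := by
      intro i
      have h1 : (Subgroup.subgroupOfEquivOfLe
          (IntermediateField.fixingSubgroup_le hLL') ⟨(a i)⁻¹ * b i, hab i⟩ :
            ↥(L'.fixingSubgroup)) =
          ⟨(w' (gact τ i.1))⁻¹ * τ * w' i.1, conj_mem_fixingSubgroup w' hw'.1 τ i.1⟩ :=
        Subtype.ext (hval i)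
      show QuotientGroup.mk' (Gc L') (Subgroup.subgroupOfEquivOfLe
          (IntermediateField.fixingSubgroup_le hLL') ⟨(a i)⁻¹ * b i, hab i⟩) = _
      rw [h1]
      show QuotientGroup.mk _ = (QuotientGroup.mk _)⁻¹
      exact (congrArg QuotientGroup.mk (inv_inv _)).symm
    have hdiff3 : Subgroup.leftTransversals.diff φ (XT (gact τ σ)) (X • XT σ) =
        (∏ σ' ∈ fib σ, trTerm w' hw'.1 τ σ')⁻¹ := by
      rw [hdiff2]
      rw [Finset.prod_congr rfl (fun i _ => hφterm i), ← Finset.prod_inv_distrib]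
      exact (Finset.prod_subtype (fib σ) (hmemfib σ hσ)
        (fun σ' => (trTerm w' hw'.1 τ σ')⁻¹)).symm
    have htr : MonoidHom.transfer φ X =
        Subgroup.leftTransversals.diff φ (XT σ) (XT (gact τ σ)) *
          Subgroup.leftTransversals.diff φ (XT (gact τ σ)) (X • XT σ) := by
      rw [Subgroup.leftTransversals.diff_mul_diff]
      exact MonoidHom.transfer_def φ (XT σ) X
    have hD : Subgroup.leftTransversals.diff φ (XT σ) (XT (gact τ σ)) =
        (F σ)⁻¹ * F (gact τ σ) := by
      rw [← Subgroup.leftTransversals.diff_mul_diff φ (XT σ) T₀ (XT (gact τ σ)),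
        ← Subgroup.leftTransversals.diff_inv]
    show MonoidHom.transfer φ X⁻¹ = _
    rw [map_inv, htr, hdiff3, hD]
    simp only [mul_inv, inv_inv]
  -- assemble
  have h1 : (∏ σ ∈ Φ, verHom L L' hLL'
        ((⟨(w (gact τ σ))⁻¹ * τ * w σ, conj_mem_fixingSubgroup w hw.1 τ σ⟩ :
            ↥(L.fixingSubgroup))⁻¹)) =
      (∏ σ ∈ Φ, F σ) * (∏ σ ∈ Φ, F (gact τ σ))⁻¹ *
        ∏ σ ∈ Φ, ∏ σ' ∈ fib σ, trTerm w' hw'.1 τ σ' := by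
    rw [Finset.prod_congr rfl hkey, Finset.prod_mul_distrib, Finset.prod_mul_distrib,
      Finset.prod_inv_distrib]
  have hτinj : ∀ x ∈ Φ, ∀ y ∈ Φ, gact τ x = gact τ y → x = y := by
    intro x _ y _ h
    have := congrArg (gact τ⁻¹) h
    rwa [← gact_mul, inv_mul_cancel, gact_one, ← gact_mul, inv_mul_cancel, gact_one] at this
  have hΦ1 : Φ.image (gact (1 : Qbar ≃ₐ[ℚ] Qbar)) = Φ := by
    ext σ
    simp only [Finset.mem_image]
    constructor
    · rintro ⟨ρ, hρ, rfl⟩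
      rwa [gact_one]
    · intro h
      exact ⟨σ, h, gact_one σ⟩
  have h2 : ∏ σ ∈ Φ, F (gact τ σ) = ∏ σ ∈ Φ, F σ := by
    rw [← Finset.prod_image hτinj]
    refine prod_eq_of_cm_cond (gact c) hjj F hFc _ _ ?_ ?_
    · exact lifted_cm_cond c hc2 hΦ τ
    · intro σ
      rw [← hΦ1]
      exact lifted_cm_cond c hc2 hΦ 1 σ
  have hbiU : Φ.biUnion fib = Φ' := by
    ext σ'
    rw [Finset.mem_biUnion]
    constructor
    · rintro ⟨σ, hσ, hσ'⟩
      exact (Finset.mem_filter.mp hσ').1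
    · intro h
      exact ⟨σ'.comp (incl hLL'), (hfib σ').mp h,
        Finset.mem_filter.mpr ⟨h, rfl⟩⟩
  have hdisj : Set.PairwiseDisjoint (↑Φ : Set (↥L →+* Qbar)) fib := by
    intro x _ y _ hxy
    simp only [Function.onFun]
    rw [Finset.disjoint_left]
    intro σ' hx hy
    exact hxy ((Finset.mem_filter.mp hx).2.symm.trans (Finset.mem_filter.mp hy).2)
  have h3 : typeTransfer w' hw'.1 Φ' τ = ∏ σ ∈ Φ, ∏ σ' ∈ fib σ, trTerm w' hw'.1 τ σ' := by
    show (∏ σ' ∈ Φ', trTerm w' hw'.1 τ σ') = _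
    rw [← hbiU, Finset.prod_biUnion hdisj]
  rw [h1, h2, mul_inv_cancel, one_mul]
  exact h3
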